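/- arXiv:2007.14275 — 6 statements merged into one kernel-verified Lean document; each statement's English description precedes it below -/
import Mathlib

section
/- Let V be a finite-dimensional complex vector space and X₁,…,X_κ : V → V pairwise commuting linear maps. Then for every λ ∈ ℂ^κ the following are equivalent: (a) λ is a joint eigenvalue of (X₁,…,X_κ), i.e. there exists v ∈ V, v ≠ 0, with X_k v = λ_k v for all k; (b) the Koszul complex of (X₁−λ₁,…,X_κ−λ_κ) fails to be exact, i.e. ker d_{X−λ} ≠ ran d_{X−λ} inside V ⊗ ⋀(ℂ^κ). In other words, the Taylor spectrum of the commuting tuple (X₁,…,X_κ) on V equals exactly the set of its joint eigenvalues. -/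
open TensorProduct

/-- `VΛ := V ⊗ ⋀(ℂ^κ)`, the tensor product of `V` with the exterior algebra of `ℂ^κ`. -/
noncomputable abbrev VLambda (κ : ℕ) (V : Type*) [AddCommGroup V] [Module ℂ V] :=
  TensorProduct ℂ V (ExteriorAlgebra ℂ (Fin κ → ℂ))

/-- The Koszul differential `d_X` on `V ⊗ ⋀(ℂ^κ)`, determined by
`d_X (u ⊗ ω) = Σ_k (X_k u) ⊗ (e_k ∧ ω)`. -/
noncomputable def koszulD {κ : ℕ} {V : Type*} [AddCommGroup V] [Module ℂ V]
    (X : Fin κ → Module.End ℂ V) :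
    VLambda κ V →ₗ[ℂ] VLambda κ V :=
  ∑ k : Fin κ, TensorProduct.map (X k)
    (LinearMap.mulLeft ℂ (ExteriorAlgebra.ι ℂ (Pi.single k (1 : ℂ))))

/-!
If `λ` is a joint eigenvalue with eigenvector `v`, then `v ⊗ 1` is a cycle of the Koszul complex
of `Y = X - λ` which is not a boundary, since the projection onto `V ⊗ ⋀⁰` kills every boundary.
Conversely, if the `Y_k` have no common kernel vector, then the ideal they generate in the
commutative Artinian algebra `ℂ[Y]` is the unit ideal: a proper ideal lies in a maximal ideal,
which in an Artinian ring is a minimal prime and hence, `V` being faithful, an associated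
prime of `V`; so it annihilates some `v ≠ 0`. Writing `1 = Σ a_k Y_k` with `a_k ∈ ℂ[Y]`,
contraction with the `a_k` is a contracting homotopy for the Koszul differential, so the complex
is exact.
-/

theorem Ideal.exists_ne_zero_forall_smul_eq_zero_of_ne_top {A M : Type*} [CommRing A]
    [IsArtinianRing A] [AddCommGroup M] [Module A M] [Module.Finite A M] [FaithfulSMul A M]
    {J : Ideal A} (hJ : J ≠ ⊤) : ∃ v : M, v ≠ 0 ∧ ∀ a ∈ J, a • v = 0 := by
  obtain ⟨m, hm, hJm⟩ := J.exists_le_maximal hJ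
  have hmin : m ∈ (Module.annihilator A M).minimalPrimes :=
    IsArtinianRing.mem_minimalPrimes (Module.annihilator_eq_bot.mpr ‹_› ▸ bot_le)
  obtain ⟨-, v, hv⟩ := isAssociatedPrime_iff.mp
    (Module.associatedPrimes.minimalPrimes_annihilator_subset_associatedPrimes A M hmin)
  refine ⟨v, ?_, fun a ha => ?_⟩
  · rintro rfl
    exact hm.ne_top (hv.trans Submodule.colon_singleton_zero)
  · simpa [hv, Submodule.mem_colon_singleton] using hJm ha

open scoped IsMulCommutative in
theorem Module.End.exists_sum_mul_eq_one {K V ι : Type*} [Field K] [AddCommGroup V] [Module K V]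
    [FiniteDimensional K V] [Fintype ι] (Y : ι → Module.End K V)
    (hc : ∀ i j, Commute (Y i) (Y j)) (h : ∀ v, (∀ k, Y k v = 0) → v = 0) :
    ∃ a : ι → Module.End K V, (∀ k l, Commute (a k) (Y l)) ∧ ∑ k, a k * Y k = 1 := by
  let A := Algebra.adjoin K (Set.range Y)
  have : IsMulCommutative A := Algebra.isMulCommutative_adjoin K (by
    rintro _ ⟨i, rfl⟩ _ ⟨j, rfl⟩; exact hc i j)
  let y : ι → A := fun k => ⟨Y k, Algebra.subset_adjoin ⟨k, rfl⟩⟩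
  have : IsArtinianRing A := IsArtinianRing.of_finite K A
  have : Module.Finite A V := Module.Finite.of_restrictScalars_finite K A V
  by_cases hspan : Ideal.span (Set.range y) = ⊤
  · obtain ⟨c, hcy⟩ := Ideal.mem_span_range_iff_exists_fun.mp (hspan ▸ Submodule.mem_top (x := 1))
    refine ⟨fun k => c k, fun k l => congrArg Subtype.val (mul_comm (c k) (y l)), ?_⟩
    simpa using congrArg Subtype.val hcy
  · obtain ⟨v, hv, hyv⟩ := Ideal.exists_ne_zero_forall_smul_eq_zero_of_ne_top (M := V) hspan
    exact absurd (h v fun k => hyv _ (Ideal.subset_span ⟨k, rfl⟩)) hv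

section Koszul

variable {κ : ℕ} {V : Type*} [AddCommGroup V] [Module ℂ V]

theorem koszulD_tmul (Y : Fin κ → Module.End ℂ V) (u : V) (ω : ExteriorAlgebra ℂ (Fin κ → ℂ)) :
    koszulD Y (u ⊗ₜ ω) = ∑ k, Y k u ⊗ₜ (ExteriorAlgebra.ι ℂ (Pi.single k 1) * ω) := by
  simp [koszulD, LinearMap.sum_apply]

theorem koszulD_comp_self (Y : Fin κ → Module.End ℂ V) (hY : ∀ i j, Commute (Y i) (Y j)) :
    koszulD Y ∘ₗ koszulD Y = 0 := by
  refine TensorProduct.ext' fun u ω => ?_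
  let f : Fin κ → Fin κ → VLambda κ V := fun k l =>
    Y l (Y k u) ⊗ₜ (ExteriorAlgebra.ι ℂ (Pi.single l 1) * (ExteriorAlgebra.ι ℂ (Pi.single k 1) * ω))
  have hf : ∀ k l, f k l + f l k = 0 := fun k l => by
    simp only [f, ← Module.End.mul_apply, (hY k l).eq, ← TensorProduct.tmul_add, ← mul_assoc,
      ← add_mul, ExteriorAlgebra.ι_add_mul_swap, zero_mul, TensorProduct.tmul_zero]
  have hsum : (2 : ℂ) • ∑ k, ∑ l, f k l = 0 := by
    rw [two_smul]
    nth_rw 2 [Finset.sum_comm]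
    simp only [← Finset.sum_add_distrib, hf, Finset.sum_const_zero]
  simpa [koszulD_tmul, f] using (smul_eq_zero.mp hsum).resolve_left two_ne_zero

noncomputable def koszulHomotopy (a : Fin κ → Module.End ℂ V) : VLambda κ V →ₗ[ℂ] VLambda κ V :=
  ∑ l, TensorProduct.map (a l) (CliffordAlgebra.contractLeft (LinearMap.proj l))

theorem koszulHomotopy_tmul (a : Fin κ → Module.End ℂ V) (u : V)
    (ω : ExteriorAlgebra ℂ (Fin κ → ℂ)) :
    koszulHomotopy a (u ⊗ₜ ω)
      = ∑ l, a l u ⊗ₜ CliffordAlgebra.contractLeft (LinearMap.proj l) ω := by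
  simp [koszulHomotopy, LinearMap.sum_apply]

theorem koszulD_comp_koszulHomotopy_add (Y a : Fin κ → Module.End ℂ V)
    (h : ∀ k l, Commute (a k) (Y l)) :
    koszulD Y ∘ₗ koszulHomotopy a + koszulHomotopy a ∘ₗ koszulD Y
      = TensorProduct.map (∑ l, a l * Y l) LinearMap.id := by
  have anticomm : ∀ k l (ω : ExteriorAlgebra ℂ (Fin κ → ℂ)),
      ExteriorAlgebra.ι ℂ (Pi.single k 1) * CliffordAlgebra.contractLeft (LinearMap.proj l) ω
        + CliffordAlgebra.contractLeft (LinearMap.proj l) (ExteriorAlgebra.ι ℂ (Pi.single k 1) * ω)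
        = (Pi.single k 1 : Fin κ → ℂ) l • ω := fun k l ω => by
    rw [CliffordAlgebra.contractLeft_ι_mul, LinearMap.proj_apply, add_sub_cancel]
  refine TensorProduct.ext' fun u ω => ?_
  simp only [LinearMap.add_apply, LinearMap.comp_apply, koszulD_tmul, koszulHomotopy_tmul, map_sum]
  have hYa : ∀ k l v, Y k (a l v) = a l (Y k v) := fun k l v =>
    LinearMap.congr_fun (h l k).eq.symm v
  conv_lhs => arg 2; rw [Finset.sum_comm]
  simp only [hYa, ← Finset.sum_add_distrib, ← TensorProduct.tmul_add, anticomm]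
  simp [Pi.single_apply, TensorProduct.sum_tmul, apply_ite (TensorProduct.tmul ℂ _)]

theorem ker_koszulD_eq_range_of_sum_mul_eq_one (Y a : Fin κ → Module.End ℂ V)
    (hY : ∀ i j, Commute (Y i) (Y j)) (h : ∀ k l, Commute (a k) (Y l))
    (hsum : ∑ l, a l * Y l = 1) :
    LinearMap.ker (koszulD Y) = LinearMap.range (koszulD Y) := by
  refine le_antisymm (fun x hx => ⟨koszulHomotopy a x, ?_⟩) (LinearMap.range_le_ker_iff.mpr
    (koszulD_comp_self Y hY))
  have := LinearMap.congr_fun (koszulD_comp_koszulHomotopy_add Y a h) x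
  rwa [hsum, Module.End.one_eq_id, TensorProduct.map_id, LinearMap.add_apply,
    LinearMap.comp_apply, LinearMap.comp_apply, LinearMap.mem_ker.mp hx, map_zero, add_zero] at this

theorem tmul_one_notMem_range_koszulD (Y : Fin κ → Module.End ℂ V) {v : V} (hv : v ≠ 0) :
    v ⊗ₜ 1 ∉ LinearMap.range (koszulD Y) := by
  let ε : VLambda κ V →ₗ[ℂ] V := (TensorProduct.rid ℂ V).toLinearMap ∘ₗ
    TensorProduct.map LinearMap.id ExteriorAlgebra.algebraMapInv.toLinearMap
  have hε : ε ∘ₗ koszulD Y = 0 :=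
    TensorProduct.ext' fun u ω => by simp [ε, koszulD_tmul, ExteriorAlgebra.algebraMapInv]
  rintro ⟨x, hx⟩
  apply hv
  simpa [ε, hx] using LinearMap.congr_fun hε x

theorem ker_koszulD_ne_range (Y : Fin κ → Module.End ℂ V) {v : V} (hv : v ≠ 0)
    (hYv : ∀ k, Y k v = 0) :
    LinearMap.ker (koszulD Y) ≠ LinearMap.range (koszulD Y) := by
  intro h
  refine tmul_one_notMem_range_koszulD Y hv (h ▸ LinearMap.mem_ker.mpr ?_)
  simp [koszulD_tmul, hYv]

end Koszul

/-- Let `V` be a finite-dimensional complex vector space and `X₁,…,X_κ`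
pairwise commuting linear maps on `V`.  For every `λ ∈ ℂ^κ` the following are equivalent:
(a) `λ` is a joint eigenvalue of `(X₁,…,X_κ)`, i.e. there is `v ≠ 0` with `X_k v = λ_k v`
for all `k`; (b) the Koszul complex of `(X₁−λ₁,…,X_κ−λ_κ)` fails to be exact, i.e.
`ker d_{X−λ} ≠ ran d_{X−λ}` inside `V ⊗ ⋀(ℂ^κ)`.  In other words, the Taylor spectrum of
the commuting tuple `(X₁,…,X_κ)` on `V` is exactly the set of its joint eigenvalues. -/
theorem taylor_spectrum_eq_joint_eigenvalues_finDim
    {κ : ℕ} {V : Type*} [AddCommGroup V] [Module ℂ V] [FiniteDimensional ℂ V]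
    (X : Fin κ → Module.End ℂ V)
    (hcomm : ∀ i j, X i * X j = X j * X i)
    (lam : Fin κ → ℂ) :
    (∃ v : V, v ≠ 0 ∧ ∀ k, X k v = lam k • v) ↔
      LinearMap.ker (koszulD (fun k => X k - lam k • 1))
        ≠ LinearMap.range (koszulD (fun k => X k - lam k • 1)) := by
  set Y : Fin κ → Module.End ℂ V := fun k => X k - lam k • 1
  have hY : ∀ i j, Commute (Y i) (Y j) := fun i j =>
    ((Commute.sub_right (hcomm i j) ((Commute.one_right _).smul_right _)).sub_left
      ((Commute.one_left _).smul_left _))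
  have hYv : ∀ v k, Y k v = 0 ↔ X k v = lam k • v := fun v k => by simp [Y, sub_eq_zero]
  constructor
  · rintro ⟨v, hv, hXv⟩
    exact ker_koszulD_ne_range Y hv fun k => (hYv v k).mpr (hXv k)
  · intro hne
    by_contra hno
    obtain ⟨a, ha, hsum⟩ := Module.End.exists_sum_mul_eq_one Y hY fun v hv => by
      by_contra hv0
      exact hno ⟨v, hv0, fun k => (hYv v k).mp (hv k)⟩
    exact hne (ker_koszulD_eq_range_of_sum_mul_eq_one Y a hY ha hsum)
end

section
/- Let H be a complex Hilbert space and let d, Q, R, K be bounded linear operators on H such that d ∘ d = 0, K is compact, ‖R‖ < 1, and Q d + d Q = Id + R + K. Then the range of d is a closed subspace of H and the quotient vector space ker d / ran d is finite-dimensional. -/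
/-!
On the closed subspace `Z = ker d` the term `Q d` vanishes, so compressing the parametrix identity
to `Z` writes the compression `A` of `d Q` as `A = 1 + U + S` with `‖U‖ < 1` and `S` compact, while
`ran A ⊆ ran d`. Such an `A` is Fredholm in the weak sense needed here: on `ker A` and on `(ran A)ᗮ`
the compact operator `S` is bounded below (there `⟪A y, y⟫ = 0`, so `‖y‖² ≤ ‖U‖ ‖y‖² + ‖S y‖ ‖y‖`),
so both are finite dimensional; and `A` is bounded below on `(ker A)ᗮ`, since otherwise a
subsequence along which `S` converges would converge itself, because `A - S = 1 + U` is invertible,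
to a unit vector of `ker A ∩ (ker A)ᗮ`. Hence `ran A` is closed of finite codimension in `Z`, and so
is every subspace of `Z` containing it, in particular `ran d`.
-/

open Filter Topology NNReal

section NontriviallyNormed

variable {𝕜 E F : Type*} [NontriviallyNormedField 𝕜]
  [NormedAddCommGroup E] [NormedSpace 𝕜 E] [CompleteSpace E]
  [NormedAddCommGroup F] [NormedSpace 𝕜 F]

theorem FiniteDimensional.of_isCompactOperator_of_antilipschitzWith [CompleteSpace 𝕜]
    {S : E →L[𝕜] F} {K : ℝ≥0} (hS : IsCompactOperator S) (hK : AntilipschitzWith K S) :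
    FiniteDimensional 𝕜 E := by
  obtain ⟨C, hC, hSC⟩ := hS
  exact .of_isCompactOperator_id
    ⟨S ⁻¹' C, (hK.isClosedEmbedding S.uniformContinuous).isCompact_preimage hC, hSC⟩

theorem Submodule.finiteDimensional_of_isCompactOperator [CompleteSpace 𝕜] {S : E →L[𝕜] F}
    (hS : IsCompactOperator S) {N : Submodule 𝕜 E} (hN : IsClosed (N : Set E)) {c : ℝ}
    (hc : 0 < c) (hbound : ∀ y ∈ N, c * ‖y‖ ≤ ‖S y‖) : FiniteDimensional 𝕜 N := by
  have := hN.completeSpace_coe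
  obtain ⟨K, hK⟩ := (antilipschitzWith_iff_exists_mul_le_norm (f := S ∘L N.subtypeL)).mpr
    ⟨c, hc, fun y => hbound y y.2⟩
  exact .of_isCompactOperator_of_antilipschitzWith (hS.comp_clm N.subtypeL) hK

theorem ContinuousLinearMap.isClosed_map_of_antilipschitzWith {A : E →L[𝕜] F}
    {W : Submodule 𝕜 E} (hW : IsClosed (W : Set E)) {K : ℝ≥0}
    (hK : AntilipschitzWith K (A ∘L W.subtypeL)) : IsClosed (W.map (A : E →ₗ[𝕜] F) : Set F) := by
  have := hW.completeSpace_coe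
  convert hK.isClosed_range (A ∘L W.subtypeL).uniformContinuous using 1
  rw [ContinuousLinearMap.coe_comp, Set.range_comp, Submodule.coe_subtypeL, Submodule.coe_subtype,
    Subtype.range_coe]
  rfl

end NontriviallyNormed

section RCLike

variable {𝕜 E F : Type*} [RCLike 𝕜] [NormedAddCommGroup E] [NormedSpace 𝕜 E]
  [NormedAddCommGroup F] [NormedSpace 𝕜 F]

theorem ContinuousLinearMap.exists_norm_eq_one_norm_lt {A : E →L[𝕜] F} {x : E} {c : ℝ}
    (h : ‖A x‖ < c * ‖x‖) : ∃ a : 𝕜, ‖a • x‖ = 1 ∧ ‖A (a • x)‖ < c := by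
  have hx : x ≠ 0 := by rintro rfl; simp at h
  refine ⟨(‖x‖ : 𝕜)⁻¹, norm_smul_inv_norm hx, ?_⟩
  rw [map_smul, norm_smul, norm_inv, RCLike.norm_ofReal, abs_norm,
    inv_mul_lt_iff₀ (norm_pos_iff.mpr hx), mul_comm]
  exact h

theorem ContinuousLinearMap.exists_antilipschitzWith_comp_subtypeL_of_disjoint_ker
    (e : E ≃L[𝕜] F) {A S : E →L[𝕜] F} (hS : IsCompactOperator S) (hA : A = e + S)
    {W : Submodule 𝕜 E} (hW : IsClosed (W : Set E)) (hWA : Disjoint W A.ker) :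
    ∃ K, AntilipschitzWith K (A ∘L W.subtypeL) := by
  by_contra hne
  rw [antilipschitzWith_iff_exists_mul_le_norm] at hne
  push Not at hne
  have hseq (n : ℕ) : ∃ v ∈ W, ‖v‖ = 1 ∧ ‖A v‖ < 1 / (n + 1) := by
    obtain ⟨x, hx⟩ := hne (1 / (n + 1)) (by positivity)
    obtain ⟨a, ha⟩ := exists_norm_eq_one_norm_lt hx
    exact ⟨a • x, W.smul_mem a x.2, ha⟩
  choose v hvW hv1 hvA using hseq
  have hAv : Tendsto (A ∘ v) atTop (𝓝 0) :=
    squeeze_zero_norm (fun n => (hvA n).le) tendsto_one_div_add_atTop_nhds_zero_nat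
  obtain ⟨C, hC, hSC⟩ := hS.image_closedBall_subset_compact 1
  obtain ⟨z, -, φ, hφ, hSz⟩ := hC.tendsto_subseq (x := S ∘ v) fun n =>
    hSC ⟨v n, by simp [hv1], rfl⟩
  have hAvφ := hAv.comp hφ.tendsto_atTop
  have hv : Tendsto (v ∘ φ) atTop (𝓝 (e.symm (0 - z))) := by
    have := (e.symm.continuous.tendsto _).comp (hAvφ.sub hSz)
    convert this using 2
    funext n
    simp [hA]
  set w := e.symm (0 - z)
  have hwW : w ∈ W := hW.mem_of_tendsto hv (.of_forall fun n => hvW (φ n))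
  have hwA : A w = 0 := tendsto_nhds_unique ((A.continuous.tendsto w).comp hv) hAvφ
  have hw1 : ‖w‖ = 1 :=
    tendsto_nhds_unique ((continuous_norm.tendsto w).comp hv) (by simp [Function.comp_def, hv1])
  have hw0 : w = 0 := (Submodule.disjoint_def.mp hWA) w hwW hwA
  simp [hw0] at hw1

end RCLike

section InnerProduct

open RCLike

variable {𝕜 E : Type*} [RCLike 𝕜] [NormedAddCommGroup E] [InnerProductSpace 𝕜 E]
  {U S : E →L[𝕜] E}

theorem one_sub_norm_mul_norm_le_of_inner_one_add_add_eq_zero {y : E}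
    (hy : inner 𝕜 ((1 + U + S) y) y = 0) : (1 - ‖U‖) * ‖y‖ ≤ ‖S y‖ := by
  rcases (norm_nonneg y).eq_or_lt with hy0 | hy0
  · rw [← hy0, mul_zero]
    exact norm_nonneg _
  have hsum : ‖y‖ ^ 2 = -re (inner 𝕜 (U y) y) - re (inner 𝕜 (S y) y) := by
    have := congrArg re hy
    simp only [add_apply, one_apply_eq_self, inner_add_left, map_add, inner_self_eq_norm_sq,
      map_zero] at this
    linarith
  have hre (T : E →L[𝕜] E) : -re (inner 𝕜 (T y) y) ≤ ‖T y‖ * ‖y‖ :=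
    (neg_le_abs _).trans ((abs_re_le_norm _).trans (norm_inner_le_norm _ _))
  have hUy : ‖U y‖ * ‖y‖ ≤ ‖U‖ * ‖y‖ * ‖y‖ := by gcongr; exact U.le_opNorm y
  refine le_of_mul_le_mul_right ?_ hy0
  nlinarith [hre U, hre S]

variable [CompleteSpace E]

theorem finiteDimensional_ker_one_add_add (hU : ‖U‖ < 1) (hS : IsCompactOperator S) :
    FiniteDimensional 𝕜 (1 + U + S).ker :=
  Submodule.finiteDimensional_of_isCompactOperator hS (ContinuousLinearMap.isClosed_ker _)
    (sub_pos.mpr hU) fun y hy =>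
      one_sub_norm_mul_norm_le_of_inner_one_add_add_eq_zero
        (by rw [show (1 + U + S) y = 0 from hy, inner_zero_left])

theorem finiteDimensional_orthogonal_range_one_add_add (hU : ‖U‖ < 1)
    (hS : IsCompactOperator S) : FiniteDimensional 𝕜 (1 + U + S).rangeᗮ :=
  Submodule.finiteDimensional_of_isCompactOperator hS (Submodule.isClosed_orthogonal _)
    (sub_pos.mpr hU) fun y hy =>
      one_sub_norm_mul_norm_le_of_inner_one_add_add_eq_zero
        ((Submodule.mem_orthogonal _ y).mp hy _ ⟨y, rfl⟩)

theorem isClosed_range_one_add_add (hU : ‖U‖ < 1) (hS : IsCompactOperator S) :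
    IsClosed ((1 + U + S).range : Set E) := by
  set A := 1 + U + S
  have := finiteDimensional_ker_one_add_add hU hS
  let e := ContinuousLinearEquiv.unitsEquiv 𝕜 E (Units.oneSub (-U) (by rwa [norm_neg]))
  have hA : A = e + S := by
    ext x
    simp [A, e, ContinuousLinearEquiv.unitsEquiv_apply]
  obtain ⟨K, hK⟩ := A.exists_antilipschitzWith_comp_subtypeL_of_disjoint_ker e hS hA
    A.ker.isClosed_orthogonal A.ker.orthogonal_disjoint.symm
  have : A.kerᗮ.CoFG := Submodule.FG.cofg_of_isCompl
    A.ker.isCompl_orthogonal (Module.Finite.iff_fg.mp this)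
  exact LinearMap.isClosed_range_of_isClosed_map_of_finiteDimensional_quotient
    (A.isClosed_map_of_antilipschitzWith A.ker.isClosed_orthogonal hK)

theorem coFG_range_one_add_add (hU : ‖U‖ < 1) (hS : IsCompactOperator S) :
    (1 + U + S).range.CoFG := by
  have := (isClosed_range_one_add_add hU hS).completeSpace_coe
  exact Submodule.FG.cofg_of_isCompl
    (Submodule.isCompl_orthogonal (K := (1 + U + S).range)).symm
    (Module.Finite.iff_fg.mp (finiteDimensional_orthogonal_range_one_add_add hU hS))

end InnerProduct

namespace Submodule

variable {𝕜 E : Type*} [RCLike 𝕜] [NormedAddCommGroup E] [InnerProductSpace 𝕜 E]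
  (Z : Submodule 𝕜 E) [Z.HasOrthogonalProjection]

noncomputable def compression (T : E →L[𝕜] E) : Z →L[𝕜] Z :=
  Z.orthogonalProjectionOnto ∘L T ∘L Z.subtypeL

theorem norm_compression_le (T : E →L[𝕜] E) : ‖Z.compression T‖ ≤ ‖T‖ :=
  ContinuousLinearMap.opNorm_le_bound _ (norm_nonneg T) fun z =>
    (Z.norm_orthogonalProjectionOnto_apply_le (T z)).trans (T.le_opNorm z)

theorem isCompactOperator_compression {T : E →L[𝕜] E} (hT : IsCompactOperator T) :
    IsCompactOperator (Z.compression T) :=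
  (hT.comp_clm Z.subtypeL).clm_comp Z.orthogonalProjectionOnto

theorem coe_compression_apply_of_mem {T : E →L[𝕜] E} {z : Z} (h : T z ∈ Z) :
    (Z.compression T z : E) = T z :=
  congrArg Subtype.val (Z.orthogonalProjectionOnto_mem_subspace_eq_self ⟨T z, h⟩)

end Submodule

/-- Let `H` be a complex Hilbert space and `d, Q, R, K` bounded
operators on `H` with `d ∘ d = 0`, `K` compact, `‖R‖ < 1` and `Q d + d Q = Id + R + K`.
Then the range of `d` is closed and `ker d / ran d` is finite-dimensional. -/
theorem range_closed_and_cohomology_finiteDimensional_of_parametrix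
    {H : Type*} [NormedAddCommGroup H] [InnerProductSpace ℂ H] [CompleteSpace H]
    (d Q R K : H →L[ℂ] H)
    (hd : d.comp d = 0)
    (hK : IsCompactOperator ⇑K)
    (hR : ‖R‖ < 1)
    (heq : Q.comp d + d.comp Q = ContinuousLinearMap.id ℂ H + R + K) :
    IsClosed (LinearMap.range (d : H →ₗ[ℂ] H) : Set H) ∧
      FiniteDimensional ℂ
        ((↥(LinearMap.ker (d : H →ₗ[ℂ] H))) ⧸
          (Submodule.comap (LinearMap.ker (d : H →ₗ[ℂ] H)).subtype (LinearMap.range (d : H →ₗ[ℂ] H)))) := by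
  set Z := LinearMap.ker (d : H →ₗ[ℂ] H)
  set B := LinearMap.range (d : H →ₗ[ℂ] H)
  have hZ : IsClosed (Z : Set H) := d.isClosed_ker
  have := hZ.completeSpace_coe
  have hBZ : B ≤ Z := by
    rintro _ ⟨x, rfl⟩
    exact congr($hd x)
  have hA : Z.compression (d ∘L Q) = 1 + Z.compression R + Z.compression K := by
    ext1 z
    have hz := congr(Z.orthogonalProjectionOnto ($heq z))
    simp only [add_apply, ContinuousLinearMap.comp_apply, show d z = 0 from z.2, map_zero,
      zero_add, ContinuousLinearMap.id_apply, map_add,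
      Submodule.orthogonalProjectionOnto_mem_subspace_eq_self] at hz
    simpa [Submodule.compression] using hz
  have hU := (Z.norm_compression_le R).trans_lt hR
  have hS := Z.isCompactOperator_compression hK
  have hcl := isClosed_range_one_add_add hU hS
  have hcofg := coFG_range_one_add_add hU hS
  rw [← hA] at hcl hcofg
  have hle : (Z.compression (d ∘L Q)).range ≤ B.comap Z.subtype := by
    rintro _ ⟨z, rfl⟩
    change (Z.compression (d ∘L Q) z : H) ∈ B
    rw [Z.coe_compression_apply_of_mem (hBZ ⟨Q z, rfl⟩)]
    exact ⟨Q z, rfl⟩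
  refine ⟨?_, hcofg.of_le hle⟩
  have hF := Submodule.isClosed_mono_of_finiteDimensional_quotient hcl hle
  rw [← inf_eq_right.mpr hBZ, ← Submodule.map_comap_subtype, Submodule.map_coe]
  exact hZ.isClosedEmbedding_subtypeVal.isClosedMap _ hF
end

section
/- Let H be a complex Hilbert space and let d, Q, R, K be bounded linear operators on H such that d ∘ d = 0, K is compact, ‖R‖ < 1, and Q d + d Q = Id + R + K. Then there exists a bounded finite-rank projection Π on H commuting with d (Π d = d Π), whose range is therefore a finite-dimensional d-invariant subspace, such that the map u ↦ Π u induces a well-defined linear isomorphism from ker d / ran d onto ker(d|_{ran Π}) / d(ran Π). -/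
/-!
Since `‖R‖ < 1`, the operator `1 + R + K` is a compact perturbation of an invertible operator.
Let `ρ` be the orthogonal projection onto `(range d)ᗮ`. Applying `ρ` to the homotopy formula
kills `d Q u`, so for `u ∈ (range d)ᗮ` we get `(1 + ρR + ρK) u = ρ Q d u`. Hence bounded
sequences in `(range d)ᗮ` along which `d u → 0` have convergent subsequences. Applied on
`(ker d)ᗮ` this bounds `d` below there, so `range d` is closed; applied on the harmonic space
`(range d)ᗮ ⊓ ker d` it makes that space finite-dimensional. The orthogonal projection onto the
harmonic space annihilates `range d` and maps into `ker d`, so it commutes with `d`, and since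
`ker d = range d ⊕ harmonic space` it induces the isomorphism on cohomology.
-/

open Filter Topology

section Compactness

variable {𝕜 E : Type*} [NontriviallyNormedField 𝕜] [NormedAddCommGroup E] [NormedSpace 𝕜 E]

theorem exists_tendsto_subseq_of_tendsto_add_add_compact [CompleteSpace E] {B C : E →L[𝕜] E}
    (hB : ‖B‖ < 1) (hC : IsCompactOperator C) {u : ℕ → E} {M : ℝ} (hu : ∀ n, ‖u n‖ ≤ M) {y : E}
    (hy : Tendsto (fun n ↦ u n + B (u n) + C (u n)) atTop (𝓝 y)) :
    ∃ x, ∃ φ : ℕ → ℕ, StrictMono φ ∧ Tendsto (u ∘ φ) atTop (𝓝 x) := by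
  have hC' : IsCompactOperator (C : E →ₗ[𝕜] E) := hC
  obtain ⟨z, -, φ, hφ, hCu⟩ := (hC'.isCompact_closure_image_closedBall M).tendsto_subseq
    (x := fun n ↦ C (u n)) fun n ↦ subset_closure ⟨u n, by simpa using hu n, rfl⟩
  -- `1 + B` is invertible by the Neumann series.
  set J := Units.oneSub (-B) (by rwa [norm_neg])
  have hJ : ∀ v, (↑J⁻¹ : E →L[𝕜] E) (v + B v) = v := fun v ↦ by
    simpa [J, sub_neg_eq_add, add_comm] using congrArg (· v) J.inv_mul
  refine ⟨(↑J⁻¹ : E →L[𝕜] E) (y - z), φ, hφ, ?_⟩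
  have hlim := ((↑J⁻¹ : E →L[𝕜] E).continuous.tendsto _).comp
    ((hy.comp hφ.tendsto_atTop).sub hCu)
  refine hlim.congr fun n ↦ ?_
  simp [hJ]

theorem Submodule.finiteDimensional_of_forall_tendsto_subseq [CompleteSpace 𝕜]
    {S : Submodule 𝕜 E} (hS : IsClosed (S : Set E))
    (h : ∀ u : ℕ → E, (∀ n, u n ∈ S) → (∀ n, ‖u n‖ ≤ 1) →
      ∃ x, ∃ φ : ℕ → ℕ, StrictMono φ ∧ Tendsto (u ∘ φ) atTop (𝓝 x)) :
    FiniteDimensional 𝕜 S := by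
  refine .of_isCompact_closedBall₀ 𝕜 one_pos (IsSeqCompact.isCompact fun v hv ↦ ?_)
  obtain ⟨x, φ, hφ, hx⟩ := h (fun n ↦ v n) (fun n ↦ (v n).2) (by simpa using hv)
  have hxS : x ∈ S := hS.mem_of_tendsto hx (.of_forall fun n ↦ (v (φ n)).2)
  refine ⟨⟨x, hxS⟩, ?_, φ, hφ, Topology.IsInducing.subtypeVal.tendsto_nhds_iff.mpr hx⟩
  have := (Metric.isClosed_closedBall (x := (0 : E)) (ε := 1)).mem_of_tendsto hx
    (.of_forall fun n ↦ by simpa using hv (φ n))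
  simpa using this

end Compactness

section BoundedBelow

variable {𝕜 E F : Type*} [RCLike 𝕜] [NormedAddCommGroup E] [NormedSpace 𝕜 E]
  [NormedAddCommGroup F] [NormedSpace 𝕜 F]

theorem exists_pos_mul_norm_le_of_forall_tendsto_subseq {T : E →L[𝕜] F} {S : Submodule 𝕜 E}
    (hS : IsClosed (S : Set E)) (hST : Disjoint S (LinearMap.ker (T : E →ₗ[𝕜] F)))
    (h : ∀ u : ℕ → E, (∀ n, u n ∈ S) → (∀ n, ‖u n‖ ≤ 1) →
      Tendsto (fun n ↦ T (u n)) atTop (𝓝 0) →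
      ∃ x, ∃ φ : ℕ → ℕ, StrictMono φ ∧ Tendsto (u ∘ φ) atTop (𝓝 x)) :
    ∃ c > 0, ∀ x ∈ S, c * ‖x‖ ≤ ‖T x‖ := by
  by_contra! hcon
  have hunit : ∀ n : ℕ, ∃ z ∈ S, ‖z‖ = 1 ∧ ‖T z‖ < 1 / (n + 1) := fun n ↦ by
    obtain ⟨x, hxS, hx⟩ := hcon (1 / (n + 1)) (by positivity)
    have hx0 : x ≠ 0 := by rintro rfl; simp at hx
    refine ⟨(‖x‖⁻¹ : 𝕜) • x, S.smul_mem _ hxS, by simp [norm_smul, hx0], ?_⟩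
    rw [map_smul, norm_smul, norm_inv, RCLike.norm_ofReal, abs_norm]
    calc ‖x‖⁻¹ * ‖T x‖ < ‖x‖⁻¹ * (1 / (n + 1) * ‖x‖) := by gcongr
      _ = 1 / (n + 1) := by field_simp
  choose z hzS hz1 hTz using hunit
  have hTz0 : Tendsto (fun n ↦ T (z n)) atTop (𝓝 0) :=
    squeeze_zero_norm (fun n ↦ (hTz n).le) tendsto_one_div_add_atTop_nhds_zero_nat
  obtain ⟨x, φ, hφ, hx⟩ := h z hzS (fun n ↦ (hz1 n).le) hTz0
  have hxS : x ∈ S := hS.mem_of_tendsto hx (.of_forall fun n ↦ hzS (φ n))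
  have hTx : T x = 0 :=
    tendsto_nhds_unique ((T.continuous.tendsto x).comp hx) (hTz0.comp hφ.tendsto_atTop)
  have hx1 : ‖x‖ = 1 :=
    tendsto_nhds_unique ((continuous_norm.tendsto x).comp hx) (by simp [Function.comp_def, hz1])
  have : x = 0 := (Submodule.disjoint_def.mp hST) x hxS hTx
  simp [this] at hx1

end BoundedBelow

section InnerProduct

variable {𝕜 E F : Type*} [RCLike 𝕜] [NormedAddCommGroup E] [InnerProductSpace 𝕜 E]
  [NormedAddCommGroup F] [NormedSpace 𝕜 F]

theorem ContinuousLinearMap.isClosed_range_of_mul_norm_le [CompleteSpace E] {T : E →L[𝕜] F}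
    {c : ℝ} (hc : 0 < c) (h : ∀ x ∈ (LinearMap.ker (T : E →ₗ[𝕜] F))ᗮ, c * ‖x‖ ≤ ‖T x‖) :
    IsClosed (LinearMap.range (T : E →ₗ[𝕜] F) : Set F) := by
  set f := T ∘L (LinearMap.ker (T : E →ₗ[𝕜] F))ᗮ.subtypeL
  have hf : AntilipschitzWith (Real.toNNReal c⁻¹) f := f.antilipschitz_of_bound fun x ↦ by
    rw [Real.coe_toNNReal _ (by positivity), ← div_eq_inv_mul, le_div_iff₀' hc]
    exact h x x.2
  have hrange : (LinearMap.range (T : E →ₗ[𝕜] F) : Set F) = Set.range f := by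
    refine subset_antisymm ?_ fun _ ⟨x, hx⟩ ↦ ⟨x, hx⟩
    rintro _ ⟨x, rfl⟩
    refine ⟨⟨_, Submodule.starProjection_apply_mem _ x⟩, ?_⟩
    have hker : T ((LinearMap.ker (T : E →ₗ[𝕜] F)).starProjection x) = 0 :=
      LinearMap.mem_ker.mp (Submodule.starProjection_apply_mem _ x)
    simp [f, Submodule.starProjection_orthogonal_val, hker]
  rw [hrange]
  exact hf.isClosed_range f.uniformContinuous

theorem Submodule.mem_orthogonal_orthogonal_inf_iff_of_le {K₁ K₂ : Submodule 𝕜 E}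
    [K₁.HasOrthogonalProjection] (h : K₁ ≤ K₂) {x : E} (hx : x ∈ K₂) :
    x ∈ (K₁ᗮ ⊓ K₂)ᗮ ↔ x ∈ K₁ := by
  have hK₁ : K₁ ≤ (K₁ᗮ ⊓ K₂)ᗮ := K₁.le_orthogonal_orthogonal.trans (orthogonal_le inf_le_left)
  refine ⟨fun hxW ↦ ?_, fun hxK₁ ↦ hK₁ hxK₁⟩
  have hp := K₁.starProjection_apply_mem x
  have hW : x - K₁.starProjection x ∈ K₁ᗮ ⊓ K₂ :=
    ⟨K₁.sub_starProjection_mem_orthogonal x, K₂.sub_mem hx (h hp)⟩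
  have hWperp : x - K₁.starProjection x ∈ (K₁ᗮ ⊓ K₂)ᗮ := sub_mem hxW (hK₁ hp)
  have hx_eq : x = K₁.starProjection x :=
    sub_eq_zero.mp ((Submodule.mem_bot 𝕜).mp ((inf_orthogonal_eq_bot _).le ⟨hW, hWperp⟩))
  rw [hx_eq]
  exact hp

def harmonicSpace (d : E →L[𝕜] E) : Submodule 𝕜 E :=
  (LinearMap.range (d : E →ₗ[𝕜] E))ᗮ ⊓ LinearMap.ker (d : E →ₗ[𝕜] E)

end InnerProduct

theorem exists_cohomology_equiv_of_projection {R M : Type*} [Ring R] [AddCommGroup M]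
    [Module R M] {d P : M →ₗ[R] M} (hPP : ∀ x, P (P x) = P x) (hPd : ∀ x, P (d x) = 0)
    (hdP : ∀ x, d (P x) = 0)
    (hker : ∀ x ∈ LinearMap.ker d, P x = 0 → x ∈ LinearMap.range d) :
    ∃ (hmem : ∀ x ∈ LinearMap.ker d, P x ∈ LinearMap.range P ⊓ LinearMap.ker d)
      (e : (LinearMap.ker d ⧸ (LinearMap.range d).comap (LinearMap.ker d).subtype) ≃ₗ[R]
        ((LinearMap.range P ⊓ LinearMap.ker d :) ⧸
          ((LinearMap.range P).map d).comap (LinearMap.range P ⊓ LinearMap.ker d).subtype)),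
      (((LinearMap.range P).map d).comap (LinearMap.range P ⊓ LinearMap.ker d).subtype).mkQ
          ∘ₗ P.restrict hmem
        = e ∘ₗ ((LinearMap.range d).comap (LinearMap.ker d).subtype).mkQ := by
  have hmem : ∀ x ∈ LinearMap.ker d, P x ∈ LinearMap.range P ⊓ LinearMap.ker d :=
    fun x _ ↦ ⟨⟨x, rfl⟩, hdP x⟩
  have hmap : (LinearMap.range P).map d = ⊥ := by
    rw [eq_bot_iff]
    rintro _ ⟨_, ⟨x, rfl⟩, rfl⟩
    exact hdP x
  set f := (((LinearMap.range P).map d).comap (LinearMap.range P ⊓ LinearMap.ker d).subtype).mkQ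
    ∘ₗ P.restrict hmem
  have hf : Function.Surjective f := by
    refine (Submodule.mkQ_surjective _).comp fun ⟨y, ⟨x, hx⟩, hy⟩ ↦ ?_
    refine ⟨⟨y, hy⟩, Subtype.ext ?_⟩
    simp [← hx, hPP]
  have hkerf : LinearMap.ker f = (LinearMap.range d).comap (LinearMap.ker d).subtype := by
    ext ⟨x, hx⟩
    simp only [f, LinearMap.ker_comp, Submodule.ker_mkQ, Submodule.mem_comap, hmap,
      Submodule.mem_bot, LinearMap.restrict_apply, Submodule.subtype_apply]
    exact ⟨hker x hx, by rintro ⟨y, rfl⟩; exact hPd y⟩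
  exact ⟨hmem, (Submodule.quotEquivOfEq _ _ hkerf.symm).trans (f.quotKerEquivOfSurjective hf),
    LinearMap.ext fun _ ↦ rfl⟩

theorem ContinuousLinearMap.range_le_ker_of_comp_self_eq_zero {R M : Type*} [Semiring R]
    [TopologicalSpace M] [AddCommMonoid M] [Module R M] {d : M →L[R] M} (hd : d.comp d = 0) :
    LinearMap.range (d : M →ₗ[R] M) ≤ LinearMap.ker (d : M →ₗ[R] M) := by
  rintro _ ⟨x, rfl⟩
  exact congrArg (· x) hd

section Homotopy

variable {𝕜 H : Type*} [RCLike 𝕜] [NormedAddCommGroup H] [InnerProductSpace 𝕜 H]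
  [CompleteSpace H] {d Q R K : H →L[𝕜] H}

theorem exists_tendsto_subseq_of_mem_orthogonal_range (hK : IsCompactOperator K) (hR : ‖R‖ < 1)
    (heq : Q.comp d + d.comp Q = ContinuousLinearMap.id 𝕜 H + R + K) {u : ℕ → H}
    (hu : ∀ n, u n ∈ (LinearMap.range (d : H →ₗ[𝕜] H))ᗮ) (hu1 : ∀ n, ‖u n‖ ≤ 1)
    (hdu : Tendsto (fun n ↦ d (u n)) atTop (𝓝 0)) :
    ∃ x, ∃ φ : ℕ → ℕ, StrictMono φ ∧ Tendsto (u ∘ φ) atTop (𝓝 x) := by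
  set ρ := (LinearMap.range (d : H →ₗ[𝕜] H))ᗮ.starProjection
  -- Projecting onto `(range d)ᗮ` kills the term `d Q u` of the homotopy formula.
  have hρ : ∀ n, u n + (ρ ∘L R) (u n) + (ρ ∘L K) (u n) = (ρ ∘L Q) (d (u n)) := fun n ↦ by
    have h := congrArg (fun T : H →L[𝕜] H ↦ ρ (T (u n))) heq
    simp only [add_apply, ContinuousLinearMap.comp_apply,
      ContinuousLinearMap.id_apply, map_add] at h
    have hdQ : ρ (d (Q (u n))) = 0 :=
      Submodule.starProjection_orthogonal_apply_eq_zero (LinearMap.mem_range_self _ _)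
    rw [hdQ, Submodule.starProjection_eq_self_iff.mpr (hu n), add_zero] at h
    simp [h]
  have hB : ‖ρ ∘L R‖ < 1 := calc
    ‖ρ ∘L R‖ ≤ ‖ρ‖ * ‖R‖ := ContinuousLinearMap.opNorm_comp_le _ _
    _ ≤ ‖R‖ := mul_le_of_le_one_left (norm_nonneg _) (Submodule.starProjection_norm_le _)
    _ < 1 := hR
  refine exists_tendsto_subseq_of_tendsto_add_add_compact hB (C := ρ ∘L K) (hK.clm_comp ρ) hu1
    (y := 0) ?_
  simp_rw [hρ]
  simpa [Function.comp_def] using ((ρ ∘L Q).continuous.tendsto 0).comp hdu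

theorem isClosed_range_of_homotopy (hd : d.comp d = 0) (hK : IsCompactOperator K) (hR : ‖R‖ < 1)
    (heq : Q.comp d + d.comp Q = ContinuousLinearMap.id 𝕜 H + R + K) :
    IsClosed (LinearMap.range (d : H →ₗ[𝕜] H) : Set H) := by
  obtain ⟨c, hc, hbound⟩ := exists_pos_mul_norm_le_of_forall_tendsto_subseq (T := d)
    (Submodule.isClosed_orthogonal _) (Submodule.orthogonal_disjoint _).symm
    fun u hu hu1 hdu ↦ exists_tendsto_subseq_of_mem_orthogonal_range hK hR heq
      (fun n ↦ Submodule.orthogonal_le (d.range_le_ker_of_comp_self_eq_zero hd) (hu n)) hu1 hdu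
  exact d.isClosed_range_of_mul_norm_le hc hbound

theorem finiteDimensional_harmonicSpace (hK : IsCompactOperator K) (hR : ‖R‖ < 1)
    (heq : Q.comp d + d.comp Q = ContinuousLinearMap.id 𝕜 H + R + K) :
    FiniteDimensional 𝕜 (harmonicSpace d) :=
  Submodule.finiteDimensional_of_forall_tendsto_subseq
    ((Submodule.isClosed_orthogonal _).inter d.isClosed_ker)
    fun u hu hu1 ↦ exists_tendsto_subseq_of_mem_orthogonal_range hK hR heq
      (fun n ↦ (hu n).1) hu1 (by simp only [show ∀ n, d (u n) = 0 from fun n ↦ (hu n).2, tendsto_const_nhds])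

end Homotopy

/-- Let `H` be a complex Hilbert space and `d, Q, R, K` bounded
operators on `H` with `d ∘ d = 0`, `K` compact, `‖R‖ < 1` and `Q d + d Q = Id + R + K`.
Then there exists a bounded finite-rank projection `Π` on `H` commuting with `d`
(whose range is therefore a finite-dimensional `d`-invariant subspace) such that
`u ↦ Π u` induces a well-defined linear isomorphism from `ker d / ran d` onto
`ker (d|_{ran Π}) / d (ran Π)`. -/
theorem exists_finiteRank_projection_inducing_cohomology_iso
    {H : Type*} [NormedAddCommGroup H] [InnerProductSpace ℂ H] [CompleteSpace H]
    (d Q R K : H →L[ℂ] H)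
    (hd : d.comp d = 0)
    (hK : IsCompactOperator ⇑K)
    (hR : ‖R‖ < 1)
    (heq : Q.comp d + d.comp Q = ContinuousLinearMap.id ℂ H + R + K) :
    ∃ P : H →L[ℂ] H,
      P.comp P = P ∧
      FiniteDimensional ℂ ↥(LinearMap.range (P : H →ₗ[ℂ] H)) ∧
      P.comp d = d.comp P ∧
      ∃ (hmem : ∀ x ∈ LinearMap.ker (d : H →ₗ[ℂ] H), P x ∈ LinearMap.range (P : H →ₗ[ℂ] H) ⊓ LinearMap.ker (d : H →ₗ[ℂ] H))
        (e : ((↥(LinearMap.ker (d : H →ₗ[ℂ] H))) ⧸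
                (Submodule.comap (LinearMap.ker (d : H →ₗ[ℂ] H)).subtype (LinearMap.range (d : H →ₗ[ℂ] H))))
              ≃ₗ[ℂ]
             ((↥(LinearMap.range (P : H →ₗ[ℂ] H) ⊓ LinearMap.ker (d : H →ₗ[ℂ] H))) ⧸
                (Submodule.comap (LinearMap.range (P : H →ₗ[ℂ] H) ⊓ LinearMap.ker (d : H →ₗ[ℂ] H)).subtype
                  (Submodule.map (d : H →ₗ[ℂ] H) (LinearMap.range (P : H →ₗ[ℂ] H)))))),
        (Submodule.comap (LinearMap.range (P : H →ₗ[ℂ] H) ⊓ LinearMap.ker (d : H →ₗ[ℂ] H)).subtype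
            (Submodule.map (d : H →ₗ[ℂ] H) (LinearMap.range (P : H →ₗ[ℂ] H)))).mkQ
          ∘ₗ ((P : H →ₗ[ℂ] H).restrict hmem)
        = (e : _ →ₗ[ℂ] _)
          ∘ₗ (Submodule.comap (LinearMap.ker (d : H →ₗ[ℂ] H)).subtype (LinearMap.range (d : H →ₗ[ℂ] H))).mkQ := by
  have : CompleteSpace (LinearMap.range (d : H →ₗ[ℂ] H)) :=
    (isClosed_range_of_homotopy hd hK hR heq).completeSpace_coe
  have := finiteDimensional_harmonicSpace hK hR heq
  set P := (harmonicSpace d).starProjection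
  have hPP : P.comp P = P := (harmonicSpace d).isIdempotentElem_starProjection
  have hdP : ∀ x, d (P x) = 0 := fun x ↦ ((harmonicSpace d).starProjection_apply_mem x).2
  have hPd : ∀ x, P (d x) = 0 := fun x ↦ (harmonicSpace d).starProjection_apply_eq_zero_iff.mpr
    (Submodule.orthogonal_le inf_le_left
      ((LinearMap.range (d : H →ₗ[ℂ] H)).le_orthogonal_orthogonal ⟨x, rfl⟩))
  refine ⟨P, hPP, ?_, ?_, exists_cohomology_equiv_of_projection (fun x ↦ congrArg (· x) hPP)
    hPd hdP fun x hx hPx ↦ ?_⟩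
  · rw [Submodule.range_starProjection]
    infer_instance
  · ext x
    simp [hPd, hdP]
  · exact (Submodule.mem_orthogonal_orthogonal_inf_iff_of_le
      (d.range_le_ker_of_comp_self_eq_zero hd) hx).mp
      ((harmonicSpace d).starProjection_apply_eq_zero_iff.mp hPx)
end

section
/- Let H be a complex Hilbert space, R, K bounded operators on H with ‖R‖ < 1 and K compact, and set F := Id + R + K. Let Q₁,…,Q_κ be bounded operators on H, each commuting with F. Then there exists ε > 0 such that for every λ = (λ₁,…,λ_κ) ∈ ℂ^κ with Σ_j |λ_j| < ε, every u ∈ H with (F + Σ_{j=1}^κ λ_j Q_j) u = 0 lies in the generalized kernel of F, i.e. Fⁿ u = 0 for some n ∈ ℕ. -/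
/-!
Write `F = 1 + R + K` and `P = ∑ j, λ_j Q_j`. Since `P` commutes with `F`, the kernel `Z` of
`F + P` is `F`-invariant, and on `Z` we have `z = -(R + P) z - K z`, so for `‖R‖ + ‖P‖ < 1` the
compact operator `K` is bounded below on `Z`, which is therefore finite-dimensional. Every
eigenvalue `μ` of `F` on `Z` satisfies `‖μ‖ ≤ ‖P‖`, so it suffices that `0` is not a limit of
nonzero eigenvalues of `F`; then `F` is nilpotent on `Z`.

For that, split `K = K₁ + Π K` with `Π` the orthogonal projection onto a finite-dimensional
subspace `V` and `‖K₁‖ < (1 - ‖R‖) / 2`. On the half-plane `re μ < (1 - ‖R‖) / 2` the operator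
`B μ = 1 + R + K₁ - μ` is invertible, and `F - μ = B μ + Π K` is injective iff the Fredholm
determinant `det (1 + Π K (B μ)⁻¹)` on `V` is nonzero. This determinant is analytic and nonzero
far out on the negative real axis, so its zeros are isolated.
-/

open Filter Topology Module

section
variable {R E V : Type*} [Ring R] [AddCommGroup E] [Module R E] [AddCommGroup V] [Module R V]

theorem Module.End.injective_add_comp_iff {B G : End R E} (hBG : B * G = 1) (hGB : G * B = 1)
    (X : V →ₗ[R] E) (Y : E →ₗ[R] V) :
    Function.Injective ⇑(B + X ∘ₗ Y) ↔ Function.Injective ⇑(1 + Y ∘ₗ G ∘ₗ X : End R V) := by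
  have hBG' : ∀ x, B (G x) = x := LinearMap.congr_fun hBG
  have hGB' : ∀ x, G (B x) = x := LinearMap.congr_fun hGB
  simp only [injective_iff_map_eq_zero, LinearMap.add_apply, LinearMap.comp_apply,
    Module.End.one_apply]
  constructor
  · intro h v hv
    have hv' : Y (G (X v)) = -v := eq_neg_of_add_eq_zero_right hv
    have hGXv : G (X v) = 0 := h _ (by rw [hBG', hv', map_neg, add_neg_cancel])
    rw [← neg_eq_zero, ← hv', hGXv, map_zero]
  · intro h x hx
    have hx' : x + G (X (Y x)) = 0 := by simpa [hGB'] using congrArg G hx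
    have hYx : Y x = 0 := h _ (by rw [← map_add, hx', map_zero])
    simpa [hYx] using hx'
end

section
variable {K V : Type*} [Field K] [IsAlgClosed K] [AddCommGroup V] [Module K V]

theorem Module.End.maxGenEigenspace_zero_eq_top [FiniteDimensional K V] {f : End K V}
    (hf : ∀ μ, f.HasEigenvalue μ → μ = 0) : f.maxGenEigenspace 0 = ⊤ := by
  rw [eq_top_iff, ← f.iSup_maxGenEigenspace_eq_top]
  refine iSup_le fun μ => ?_
  rcases eq_or_ne μ 0 with rfl | hμ
  · exact le_rfl
  · have : f.maxGenEigenspace μ = ⊥ := by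
      by_contra hne
      exact hμ (hf μ ((hasUnifEigenvalue_iff_hasUnifEigenvalue_one (by simp)).1 hne))
    simp [this]

theorem Module.End.le_maxGenEigenspace_zero {f : End K V} {W : Submodule K V}
    [FiniteDimensional K W] (hW : ∀ w ∈ W, f w ∈ W)
    (hf : ∀ (μ : K), ∀ w ∈ W, w ≠ 0 → f w = μ • w → μ = 0) : W ≤ f.maxGenEigenspace 0 := by
  have htop : Module.End.maxGenEigenspace (f.restrict hW) 0 = ⊤ :=
    maxGenEigenspace_zero_eq_top fun μ hμ => by
      obtain ⟨w, hw⟩ := hμ.exists_hasEigenvector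
      exact hf μ w w.2 (by simpa using hw.2) (congrArg Subtype.val hw.apply_eq_smul)
  rwa [maxGenEigenspace, genEigenspace_restrict, Submodule.comap_subtype_eq_top] at htop
end

section
variable {𝕜 E : Type*} [NontriviallyNormedField 𝕜] [NormedAddCommGroup E] [NormedSpace 𝕜 E]
  [CompleteSpace E]

theorem ContinuousLinearMap.isUnit_sub_smul_one_of_norm_lt {T : E →L[𝕜] E} {c : 𝕜}
    (h : ‖T‖ < ‖c‖) : IsUnit (T - c • 1) := by
  have := spectrum.mem_resolventSet_of_norm_lt_mul <|
    (mul_le_of_le_one_right (norm_nonneg T) ContinuousLinearMap.norm_id_le).trans_lt h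
  rw [spectrum.mem_resolventSet_iff, Algebra.algebraMap_eq_smul_one, ← IsUnit.neg_iff,
    neg_sub] at this
  exact this
end

section
variable {𝕜 E F : Type*} [NontriviallyNormedField 𝕜] [CompleteSpace 𝕜]
  [NormedAddCommGroup E] [NormedSpace 𝕜 E] [CompleteSpace E]
  [NormedAddCommGroup F] [NormedSpace 𝕜 F]

theorem FiniteDimensional.of_isCompactOperator_of_antilipschitz {T : E →L[𝕜] F}
    (hT : IsCompactOperator T) {c : NNReal} (hc : AntilipschitzWith c T) :
    FiniteDimensional 𝕜 E := by
  obtain ⟨C, hC, hCT⟩ := hT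
  exact .of_isCompactOperator_id
    ⟨T ⁻¹' C, (hc.isClosedEmbedding T.uniformContinuous).isCompact_preimage hC, hCT⟩

theorem finiteDimensional_ker_one_add_add_s8 {R K : E →L[𝕜] E} (hR : ‖R‖ < 1)
    (hK : IsCompactOperator K) : FiniteDimensional 𝕜 ((1 + R + K : E →L[𝕜] E).ker) := by
  set Z := (1 + R + K : E →L[𝕜] E).ker
  have : CompleteSpace Z := (ContinuousLinearMap.isClosed_ker _).completeSpace_coe
  refine .of_isCompactOperator_of_antilipschitz (T := K ∘L Z.subtypeL) (hK.comp_clm _)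
    (c := ⟨(1 - ‖R‖)⁻¹, by have := norm_nonneg R; positivity⟩)
    (ContinuousLinearMap.antilipschitz_of_bound _ fun z => ?_)
  have hz : (z : E) + (R z + K z) = 0 := (add_assoc _ _ _).symm.trans z.2
  change ‖(z : E)‖ ≤ (1 - ‖R‖)⁻¹ * ‖K z‖
  rw [le_inv_mul_iff₀ (sub_pos.2 hR)]
  have hnorm : ‖(z : E)‖ ≤ ‖R z‖ + ‖K z‖ := by
    rw [congrArg norm (eq_neg_of_add_eq_zero_left hz), norm_neg]
    exact norm_add_le _ _
  linarith [R.le_opNorm z]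
end

section
variable {𝕜 E V : Type*} [NontriviallyNormedField 𝕜]
  [NormedAddCommGroup E] [NormedSpace 𝕜 E]
  [NormedAddCommGroup V] [NormedSpace 𝕜 V] [FiniteDimensional 𝕜 V]

theorem ContinuousLinearMap.injective_add_comp_iff_det_ne_zero {B : E →L[𝕜] E} (hB : IsUnit B)
    (X : V →L[𝕜] E) (Y : E →L[𝕜] V) :
    Function.Injective ⇑(B + X ∘L Y) ↔ (1 + Y ∘L Ring.inverse B ∘L X).det ≠ 0 := by
  have hBG : (B : End 𝕜 E) * (Ring.inverse B : E →L[𝕜] E) = 1 := by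
    simpa using congrArg ((↑) : (E →L[𝕜] E) → End 𝕜 E) (Ring.mul_inverse_cancel _ hB)
  have hGB : ((Ring.inverse B : E →L[𝕜] E) : End 𝕜 E) * B = 1 := by
    simpa using congrArg ((↑) : (E →L[𝕜] E) → End 𝕜 E) (Ring.inverse_mul_cancel _ hB)
  rw [ne_eq, LinearMap.det_eq_zero_iff_ker_ne_bot, not_not, LinearMap.ker_eq_bot]
  exact Module.End.injective_add_comp_iff hBG hGB (X : V →ₗ[𝕜] E) Y

variable [CompleteSpace 𝕜]

theorem ContinuousLinearMap.analyticOnNhd_det :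
    AnalyticOnNhd 𝕜 (fun f : V →L[𝕜] V => f.det) Set.univ := by
  classical
  let b := Module.finBasis 𝕜 V
  have hentry : ∀ i j, AnalyticOnNhd 𝕜
      (fun f : V →L[𝕜] V => LinearMap.toMatrix b b f i j) Set.univ := fun i j f _ => by
    simp only [LinearMap.toMatrix_apply]
    exact ((b.coord i).toContinuousLinearMap.comp
      (ContinuousLinearMap.apply 𝕜 V (b j))).analyticAt f
  have hdet : (fun f : V →L[𝕜] V => f.det) =
      fun f : V →L[𝕜] V => (LinearMap.toMatrix b b f).det :=
    funext fun f => (LinearMap.det_toMatrix b _).symm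
  rw [hdet]
  simp only [Matrix.det_apply']
  exact Finset.analyticOnNhd_fun_sum _ fun σ _ => analyticOnNhd_const.mul <|
    Finset.analyticOnNhd_fun_prod _ fun i _ => hentry _ _

variable [CompleteSpace E]

theorem AnalyticOnNhd.eventually_injective_add_comp {B : 𝕜 → E →L[𝕜] E} {U : Set 𝕜}
    (hB : AnalyticOnNhd 𝕜 B U) (hBU : ∀ μ ∈ U, IsUnit (B μ)) (hUo : IsOpen U)
    (hU : IsPreconnected U) (X : V →L[𝕜] E) (Y : E →L[𝕜] V) {μ₀ : 𝕜} (hμ₀ : μ₀ ∈ U)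
    (hinj : Function.Injective ⇑(B μ₀ + X ∘L Y)) {z : 𝕜} (hz : z ∈ U) :
    ∀ᶠ μ in 𝓝[≠] z, Function.Injective ⇑(B μ + X ∘L Y) := by
  set h : 𝕜 → 𝕜 := fun μ => (1 + Y ∘L Ring.inverse (B μ) ∘L X).det
  have hh : AnalyticOnNhd 𝕜 h U := fun μ hμ => by
    have hinv := analyticAt_inverse (𝕜 := 𝕜) (hBU μ hμ).unit
    rw [IsUnit.unit_spec] at hinv
    have hcomp := (((ContinuousLinearMap.compL 𝕜 V E V Y).comp
      ((ContinuousLinearMap.compL 𝕜 V E E).flip X)).analyticAt _).comp (hinv.comp (hB μ hμ))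
    exact (ContinuousLinearMap.analyticOnNhd_det _ trivial).comp (analyticAt_const.add hcomp)
  have hne : ∀ᶠ μ in 𝓝[≠] z, h μ ≠ 0 := by
    by_contra hfreq
    rw [Filter.not_eventually] at hfreq
    exact ((ContinuousLinearMap.injective_add_comp_iff_det_ne_zero (hBU μ₀ hμ₀) X Y).1 hinj)
      (hh.eqOn_zero_of_preconnected_of_frequently_eq_zero hU hz (by simpa using hfreq) hμ₀)
  filter_upwards [hne, mem_nhdsWithin_of_mem_nhds (hUo.mem_nhds hz)] with μ hμ hμU
  exact (ContinuousLinearMap.injective_add_comp_iff_det_ne_zero (hBU μ hμU) X Y).2 hμ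
end

section
variable {𝕜 E F : Type*} [RCLike 𝕜]
  [NormedAddCommGroup E] [NormedSpace 𝕜 E]
  [NormedAddCommGroup F] [InnerProductSpace 𝕜 F]

theorem Submodule.norm_sub_starProjection_le (V : Submodule 𝕜 F) [V.HasOrthogonalProjection]
    (x : F) {v : F} (hv : v ∈ V) : ‖x - V.starProjection x‖ ≤ ‖x - v‖ := by
  rw [V.starProjection_minimal]
  exact ciInf_le ⟨0, Set.forall_mem_range.mpr fun _ => norm_nonneg _⟩ (⟨v, hv⟩ : V)

theorem IsCompactOperator.exists_finiteDimensional_norm_sub_starProjection_comp_le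
    {K : E →L[𝕜] F} (hK : IsCompactOperator K) {δ : ℝ} (hδ : 0 < δ) :
    ∃ (V : Submodule 𝕜 F) (_ : FiniteDimensional 𝕜 V), ‖K - V.starProjection ∘L K‖ ≤ δ := by
  obtain ⟨t, ht, hcover⟩ := Metric.totallyBounded_iff.1
    (hK.isCompact_closure_image_closedBall 1).totallyBounded δ hδ
  have : FiniteDimensional 𝕜 (Submodule.span 𝕜 t) := FiniteDimensional.span_of_finite 𝕜 ht
  refine ⟨Submodule.span 𝕜 t, this, ContinuousLinearMap.opNorm_le_of_unit_norm hδ.le fun x hx => ?_⟩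
  obtain ⟨y, hyt, hxy⟩ := Set.mem_iUnion₂.1 <| hcover <| subset_closure
    ⟨x, by simp [hx], rfl⟩
  calc ‖(K - (Submodule.span 𝕜 t).starProjection ∘L K) x‖
      ≤ ‖K x - y‖ := Submodule.norm_sub_starProjection_le _ _ (Submodule.subset_span hyt)
    _ ≤ δ := (mem_ball_iff_norm.1 hxy).le
end

section
variable {H : Type*} [NormedAddCommGroup H] [InnerProductSpace ℂ H] [CompleteSpace H]
  {R K : H →L[ℂ] H}

theorem eventually_injective_one_add_add_sub_smul (hR : ‖R‖ < 1) (hK : IsCompactOperator K) :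
    ∀ᶠ μ in 𝓝[≠] (0 : ℂ), Function.Injective ⇑(1 + R + K - μ • 1 : H →L[ℂ] H) := by
  set s := (1 - ‖R‖) / 2 with hs
  have hs0 : 0 < s := by linarith
  obtain ⟨V, _, hV⟩ := hK.exists_finiteDimensional_norm_sub_starProjection_comp_le hs0
  set F : H →L[ℂ] H := 1 + R + K
  set K₁ := K - V.starProjection ∘L K
  set B : ℂ → H →L[ℂ] H := fun μ => 1 + R + K₁ - μ • 1
  have hFB : ∀ μ : ℂ, F - μ • 1 = B μ + V.subtypeL ∘L (V.orthogonalProjectionOnto ∘L K) :=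
    fun μ => by
      simp only [F, B, K₁]
      rw [show V.subtypeL ∘L (V.orthogonalProjectionOnto ∘L K) = V.starProjection ∘L K from rfl]
      abel
  set U : Set ℂ := {μ | μ.re < s}
  have hBU : ∀ μ ∈ U, IsUnit (B μ) := fun μ hμ => by
    have hnorm : ‖R + K₁‖ < ‖μ - 1‖ :=
      calc ‖R + K₁‖ ≤ ‖R‖ + s := (norm_add_le _ _).trans (by gcongr)
        _ < -(μ - 1).re := by simp only [Complex.sub_re, Complex.one_re]; linarith [hμ.out]
        _ ≤ ‖μ - 1‖ := (neg_le_abs _).trans (Complex.abs_re_le_norm _)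
    convert ContinuousLinearMap.isUnit_sub_smul_one_of_norm_lt hnorm using 1
    simp only [B, sub_smul, one_smul]
    abel
  set μ₀ : ℂ := ((-(‖F‖ + 1) : ℝ) : ℂ)
  have hinj : Function.Injective ⇑(F - μ₀ • 1) := by
    refine (ContinuousLinearMap.isUnit_iff_bijective.1
      (ContinuousLinearMap.isUnit_sub_smul_one_of_norm_lt ?_)).1
    rw [Complex.norm_real, Real.norm_eq_abs, abs_neg, abs_of_pos (by positivity)]
    exact lt_add_one _
  simp_rw [hFB] at hinj ⊢
  exact AnalyticOnNhd.eventually_injective_add_comp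
    (fun μ _ => analyticAt_const.sub (analyticAt_id.smul analyticAt_const)) hBU
    (isOpen_lt Complex.continuous_re continuous_const) (convex_halfSpace_re_lt s).isPreconnected
    _ _ (show μ₀.re < s by rw [Complex.ofReal_re]; linarith [norm_nonneg F]) hinj
    (show (0 : ℂ).re < s by rwa [Complex.zero_re])

theorem exists_ker_add_le_maxGenEigenspace_zero (hR : ‖R‖ < 1) (hK : IsCompactOperator K) :
    ∃ δ > 0, ∀ P : H →L[ℂ] H, Commute (1 + R + K) P → ‖P‖ < δ →
      (1 + R + K + P).ker ≤ Module.End.maxGenEigenspace ((1 + R + K : H →L[ℂ] H) : End ℂ H) 0 := by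
  obtain ⟨ε, hε, hinj⟩ := Metric.eventually_nhds_iff.1 <|
    eventually_nhdsWithin_iff.1 (eventually_injective_one_add_add_sub_smul hR hK)
  refine ⟨min ε (1 - ‖R‖), lt_min hε (sub_pos.2 hR), fun P hFP hP => ?_⟩
  set F : H →L[ℂ] H := 1 + R + K
  have : FiniteDimensional ℂ (F + P).ker := by
    have hRP : ‖R + P‖ < 1 := (norm_add_le _ _).trans_lt (by linarith [min_le_right ε (1 - ‖R‖)])
    rw [show F + P = 1 + (R + P) + K by simp only [F]; abel]
    exact finiteDimensional_ker_one_add_add_s8 hRP hK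
  refine Module.End.le_maxGenEigenspace_zero (fun z hz => ?_) (fun μ z hz hz0 hFz => ?_)
  · have hz : (F + P) z = 0 := hz
    change ((F + P) * F) z = 0
    rw [← ((Commute.refl F).add_right hFP).eq]
    change F ((F + P) z) = 0
    rw [hz, map_zero]
  · have hz : F z + P z = 0 := hz
    have hFz : F z = μ • z := hFz
    by_contra hμ
    have hμP : ‖μ‖ ≤ ‖P‖ := by
      refine le_of_mul_le_mul_right ?_ (norm_pos_iff.2 hz0)
      rw [← norm_smul, ← hFz, eq_neg_of_add_eq_zero_left hz, norm_neg]
      exact P.le_opNorm z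
    refine hz0 (hinj (y := μ) ?_ hμ ?_)
    · rw [dist_zero_right]; linarith [min_le_left ε (1 - ‖R‖)]
    · simp [hFz]
end

/-- Let `H` be a complex Hilbert space, `R, K` bounded with `‖R‖ < 1`
and `K` compact, and `F := Id + R + K`.  Let `Q₁,…,Q_κ` be bounded operators commuting
with `F`.  Then there is `ε > 0` such that for every `λ ∈ ℂ^κ` with `Σ_j |λ_j| < ε`,
every `u ∈ H` with `(F + Σ_j λ_j Q_j) u = 0` lies in the generalized kernel of `F`,
i.e. `Fⁿ u = 0` for some `n`. -/
theorem mem_generalized_kernel_of_small_perturbation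
    {H : Type*} [NormedAddCommGroup H] [InnerProductSpace ℂ H] [CompleteSpace H]
    (R K : H →L[ℂ] H) (hR : ‖R‖ < 1) (hK : IsCompactOperator ⇑K)
    {κ : ℕ} (Q : Fin κ → (H →L[ℂ] H))
    (hQ : ∀ j, (Q j).comp (ContinuousLinearMap.id ℂ H + R + K)
      = (ContinuousLinearMap.id ℂ H + R + K).comp (Q j)) :
    ∃ ε > (0 : ℝ), ∀ lam : Fin κ → ℂ, (∑ j, ‖lam j‖) < ε →
      ∀ u : H, ((ContinuousLinearMap.id ℂ H + R + K) + ∑ j, lam j • Q j) u = 0 →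
        ∃ n : ℕ, ((ContinuousLinearMap.id ℂ H + R + K) ^ n) u = 0 := by
  obtain ⟨δ, hδ, hker⟩ := exists_ker_add_le_maxGenEigenspace_zero hR hK
  set C := ∑ j, ‖Q j‖ + 1
  have hC : 0 < C := by positivity
  refine ⟨δ / C, div_pos hδ hC, fun lam hlam u hu => ?_⟩
  have hcomm : Commute (1 + R + K) (∑ j, lam j • Q j) :=
    Commute.sum_right _ _ _ fun j _ => Commute.smul_right (hQ j).symm _
  have hnorm : ‖∑ j, lam j • Q j‖ < δ :=
    calc ‖∑ j, lam j • Q j‖ ≤ ∑ j, ‖lam j‖ * C := norm_sum_le_of_le _ fun j _ =>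
          (norm_smul_le _ _).trans <| by
            gcongr
            exact (Finset.single_le_sum (fun i _ => norm_nonneg (Q i)) (Finset.mem_univ j)).trans
              (le_add_of_nonneg_right zero_le_one)
      _ = (∑ j, ‖lam j‖) * C := Finset.sum_mul _ _ _ |>.symm
      _ < δ := (lt_div_iff₀ hC).1 hlam
  obtain ⟨n, hn⟩ := (Module.End.mem_maxGenEigenspace _ _ _).1 (hker _ hcomm hnorm hu)
  rw [zero_smul, sub_zero, ← ContinuousLinearMap.toLinearMap_pow] at hn
  exact ⟨n, hn⟩
end

section
/- Let ψ : ℝ → ℝ be continuous, nonnegative, compactly supported in (0,∞), with ∫₀^∞ ψ(t) dt = 1. Let λ ∈ ℝ and ζ ∈ ℂ with Re ζ ≥ 0. If |∫₀^∞ e^{−t(ζ + iλ)} ψ(t) dt| = 1, then ζ = −iλ. -/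
open MeasureTheory Complex Set Filter Topology
open scoped ComplexConjugate ComplexOrder

/-!
Put `w = ζ + iλ`. On the support of `ψ`, which lies in `t > 0`, `|e^{-tw}| ≤ 1` since `Re w ≥ 0`.
Hence `|∫ e^{-tw} ψ| = 1 = ∫ ψ` is the equality case of the triangle inequality: rotating the
integral to the positive reals, the continuous defect `(1 - Re (c e^{-tw})) ψ(t) ≥ 0` has integral
zero, so `e^{-tw}` equals one constant on the nonempty open set `{ψ ≠ 0}`. A locally constant
exponential has derivative `-w e^{-tw} = 0` there, so `w = 0`.
-/

theorem Complex.eq_re_of_norm_le_re {z : ℂ} (hz : ‖z‖ ≤ z.re) : z = z.re := by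
  have hz_nonneg : 0 ≤ z := re_eq_norm.mp (le_antisymm (re_le_norm z) hz)
  exact ext rfl (nonneg_iff.mp hz_nonneg).2.symm

theorem Complex.eq_zero_of_exp_ofReal_mul_eventuallyEq_const {z c : ℂ} {t₀ : ℝ}
    (h : (fun t : ℝ => exp (t * z)) =ᶠ[𝓝 t₀] fun _ => c) : z = 0 := by
  have hderiv : HasDerivAt (fun t : ℝ => exp (t * z)) (exp (t₀ * z) * z) t₀ := by
    simpa using ((hasDerivAt_id (t₀ : ℂ)).mul_const z).cexp.comp_ofReal
  have hconst : HasDerivAt (fun t : ℝ => exp (t * z)) 0 t₀ :=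
    (hasDerivAt_const t₀ c).congr_of_eventuallyEq h
  simpa [exp_ne_zero] using hderiv.unique hconst

theorem Complex.norm_exp_neg_ofReal_mul_le_one {t : ℝ} {w : ℂ} (ht : 0 ≤ t) (hw : 0 ≤ w.re) :
    ‖exp (-(t : ℂ) * w)‖ ≤ 1 := by
  rw [norm_exp, Real.exp_le_one_iff]
  simpa using mul_nonneg ht hw

theorem norm_mul_le_of_norm_le_one_on_support {α : Type*} {f : α → ℂ} {ψ : α → ℝ}
    (hψ_nonneg : 0 ≤ ψ) (hf_le : ∀ x, ψ x ≠ 0 → ‖f x‖ ≤ 1) (x : α) : ‖f x * ψ x‖ ≤ ψ x := by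
  by_cases hx : ψ x = 0
  · simp [hx]
  · rw [norm_mul, norm_real, Real.norm_of_nonneg (hψ_nonneg x)]
    exact mul_le_of_le_one_left (hψ_nonneg x) (hf_le x hx)

section EqualityCase

variable {X : Type*} [TopologicalSpace X] [MeasurableSpace X] [OpensMeasurableSpace X]
  {μ : Measure X} [μ.IsOpenPosMeasure] {f : X → ℂ} {ψ : X → ℝ}

theorem re_conj_integral_mul_eq_norm_integral_of_norm_integral_mul_eq_integral
    (hf : Continuous f) (hψ : Continuous ψ) (hψ_nonneg : 0 ≤ ψ) (hψ_int : Integrable ψ μ)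
    (hf_le : ∀ x, ψ x ≠ 0 → ‖f x‖ ≤ 1) (h : ‖∫ x, f x * ψ x ∂μ‖ = ∫ x, ψ x ∂μ)
    {x : X} (hx : ψ x ≠ 0) :
    (conj (∫ x, f x * ψ x ∂μ) * f x).re = ‖∫ x, f x * ψ x ∂μ‖ := by
  set F := ∫ x, f x * ψ x ∂μ
  have hcfψ_int : Integrable (fun x => conj F * (f x * ψ x)) μ :=
    (hψ_int.mono' (by fun_prop)
      (ae_of_all _ (norm_mul_le_of_norm_le_one_on_support hψ_nonneg hf_le))).const_mul _
  -- pointwise defect in `Re (conj F * F) ≤ ‖F‖ * ∫ ψ`, which is an equality by `h`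
  set g : X → ℝ := fun x => ‖F‖ * ψ x - (conj F * (f x * ψ x)).re with hg
  have hg_nonneg : 0 ≤ g := fun x => sub_nonneg.mpr <|
    calc (conj F * (f x * ψ x)).re ≤ ‖conj F * (f x * ψ x)‖ := re_le_norm _
      _ ≤ ‖F‖ * ψ x := by
        rw [norm_mul, norm_conj]
        gcongr
        exact norm_mul_le_of_norm_le_one_on_support hψ_nonneg hf_le x
  have hg_int : Integrable g μ := (hψ_int.const_mul _).sub hcfψ_int.re
  have hg_integral : ∫ x, g x ∂μ = 0 :=
    calc ∫ x, g x ∂μ = ‖F‖ * ∫ x, ψ x ∂μ - ∫ x, (conj F * (f x * ψ x)).re ∂μ := by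
          rw [← integral_const_mul]; exact integral_sub (hψ_int.const_mul _) hcfψ_int.re
      _ = ‖F‖ * ‖F‖ - (conj F * F).re := by
          rw [← h]
          exact congrArg _ <| (reCLM.integral_comp_comm hcfψ_int).trans
            (congrArg reCLM (integral_const_mul _ _))
      _ = 0 := by rw [conj_mul', ← ofReal_pow, ofReal_re, sq, sub_self]
  have hgx : g x = 0 := by
    by_contra hgx
    exact (integral_pos_of_integrable_nonneg_nonzero (by fun_prop) hg_int hg_nonneg hgx).ne'
      hg_integral
  simp only [hg, ← mul_assoc, re_mul_ofReal, sub_eq_zero] at hgx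
  exact mul_right_cancel₀ hx hgx.symm

theorem exists_eq_const_of_norm_integral_mul_eq_integral
    (hf : Continuous f) (hψ : Continuous ψ) (hψ_nonneg : 0 ≤ ψ) (hψ_int : Integrable ψ μ)
    (hf_le : ∀ x, ψ x ≠ 0 → ‖f x‖ ≤ 1) (h : ‖∫ x, f x * ψ x ∂μ‖ = ∫ x, ψ x ∂μ) :
    ∃ c, ∀ x, ψ x ≠ 0 → f x = c := by
  set F := ∫ x, f x * ψ x ∂μ
  by_cases hF : F = 0
  · refine ⟨0, fun x hx => absurd ?_
      (integral_pos_of_integrable_nonneg_nonzero hψ hψ_int hψ_nonneg hx).ne'⟩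
    rw [← h, hF, norm_zero]
  refine ⟨‖F‖ / conj F, fun x hx => ?_⟩
  have hre := re_conj_integral_mul_eq_norm_integral_of_norm_integral_mul_eq_integral
    hf hψ hψ_nonneg hψ_int hf_le h hx
  have hnorm : ‖conj F * f x‖ ≤ (conj F * f x).re := by
    rw [hre, norm_mul, norm_conj]
    exact mul_le_of_le_one_right (norm_nonneg _) (hf_le x hx)
  rw [eq_div_iff ((map_ne_zero _).mpr hF), mul_comm, eq_re_of_norm_le_re hnorm, hre]

end EqualityCase

/-- Let `ψ : ℝ → ℝ` be continuous, nonnegative, compactly supported in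
`(0,∞)`, with `∫₀^∞ ψ(t) dt = 1`.  Let `λ ∈ ℝ` and `ζ ∈ ℂ` with `Re ζ ≥ 0`.
If `|∫₀^∞ e^{−t(ζ + iλ)} ψ(t) dt| = 1`, then `ζ = −iλ`. -/
theorem zeta_eq_neg_I_lam_of_abs_laplace_eq_one
    (ψ : ℝ → ℝ) (hcont : Continuous ψ) (hnonneg : ∀ t, 0 ≤ ψ t)
    (hsupp : HasCompactSupport ψ) (hsupp' : tsupport ψ ⊆ Set.Ioi (0 : ℝ))
    (hint : ∫ t in Set.Ioi (0 : ℝ), ψ t = 1)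
    (lam : ℝ) (ζ : ℂ) (hζ : 0 ≤ ζ.re)
    (h : ‖∫ t in Set.Ioi (0 : ℝ),
        Complex.exp (-(t : ℂ) * (ζ + (lam : ℂ) * Complex.I)) * (ψ t : ℂ)‖ = 1) :
    ζ = -(lam : ℂ) * Complex.I := by
  set w := ζ + lam * I with hw
  have hψ_pos : ∀ t, ψ t ≠ 0 → 0 < t := fun t ht => hsupp' (subset_tsupport ψ ht)
  have hψ_zero : ∀ t ∉ Ioi 0, ψ t = 0 := fun t ht => by_contra (ht ∘ hψ_pos t)
  rw [setIntegral_eq_integral_of_forall_compl_eq_zero hψ_zero] at hint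
  rw [setIntegral_eq_integral_of_forall_compl_eq_zero (by simp +contextual [hψ_zero])] at h
  obtain ⟨c, hc⟩ := exists_eq_const_of_norm_integral_mul_eq_integral (by fun_prop) hcont hnonneg
    (hcont.integrable_of_hasCompactSupport hsupp)
    (fun t ht => norm_exp_neg_ofReal_mul_le_one (hψ_pos t ht).le (by simpa [hw] using hζ))
    (h.trans hint.symm)
  obtain ⟨t₀, ht₀⟩ : ∃ t, ψ t ≠ 0 := by
    by_contra! hψ
    simp [hψ] at hint
  have hlocal : (fun t : ℝ => exp (t * -w)) =ᶠ[𝓝 t₀] fun _ => c :=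
    eventually_of_mem (hcont.isOpen_support.mem_nhds ht₀) fun t ht => by simpa using hc t ht
  have hw0 := neg_eq_zero.mp (eq_zero_of_exp_ofReal_mul_eventuallyEq_const hlocal)
  linear_combination hw0
end

section
/- Let κ ≥ 1, M ∈ GL(κ,ℝ) an invertible real κ×κ matrix, and χ : ℝ^κ → ℝ continuous, compactly supported, nonnegative, with ∫χ = 1 and χ positive on some nonempty open set. Let v : ℝ^κ → ℂ be continuous and ℤ^κ-periodic (v(t + k) = v(t) for all k ∈ ℤ^κ) and suppose v(t) = ∫_{ℝ^κ} v(t + Ms) χ(s) ds for all t ∈ ℝ^κ. Then v is constant. -/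
open MeasureTheory

lemma aux_real_const {κ : ℕ}
    (M : Matrix (Fin κ) (Fin κ) ℝ) (hM : IsUnit M.det)
    (χ : (Fin κ → ℝ) → ℝ)
    (hχcont : Continuous χ) (hχsupp : HasCompactSupport χ)
    (hχnonneg : ∀ s, 0 ≤ χ s) (hχint : ∫ s : Fin κ → ℝ, χ s = 1)
    (hχpos : ∃ U : Set (Fin κ → ℝ), IsOpen U ∧ U.Nonempty ∧ ∀ s ∈ U, 0 < χ s)
    (u : (Fin κ → ℝ) → ℝ) (hucont : Continuous u)
    (hper : ∀ (t : Fin κ → ℝ) (k : Fin κ → ℤ), u (t + fun i => (k i : ℝ)) = u t)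
    (hfix : ∀ t : Fin κ → ℝ, u t = ∫ s : Fin κ → ℝ, u (t + M.mulVec s) * χ s) :
    ∀ t, u t = u 0 := by
  have hmv : Continuous (M.mulVec) := M.mulVecLin.continuous_of_finiteDimensional
  have hcont' : ∀ t : Fin κ → ℝ, Continuous (fun s => u (t + M.mulVec s) * χ s) :=
    fun t => ((hucont.comp (continuous_const.add hmv)).mul hχcont)
  have hint : ∀ t : Fin κ → ℝ, Integrable (fun s => u (t + M.mulVec s) * χ s) :=
    fun t => (hcont' t).integrable_of_hasCompactSupport hχsupp.mul_left
  -- maximum over the unit cube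
  obtain ⟨t₀, ht₀K, ht₀max⟩ :=
    (isCompact_Icc (a := (0 : Fin κ → ℝ)) (b := 1)).exists_isMaxOn
      ⟨0, Set.mem_Icc.mpr ⟨le_refl _, fun i => zero_le_one⟩⟩ hucont.continuousOn
  set m := u t₀ with hm
  have hle : ∀ t, u t ≤ m := by
    intro t
    have hfr : (fun i => Int.fract (t i)) ∈ Set.Icc (0 : Fin κ → ℝ) 1 :=
      Set.mem_Icc.mpr ⟨fun i => Int.fract_nonneg _, fun i => (Int.fract_lt_one _).le⟩
    have heq : ((fun i => Int.fract (t i)) + fun i => ((⌊t i⌋ : ℤ) : ℝ)) = t := by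
      funext i; exact Int.fract_add_floor (t i)
    calc u t = u (fun i => Int.fract (t i)) := by
          rw [← hper (fun i => Int.fract (t i)) (fun i => ⌊t i⌋), heq]
      _ ≤ m := ht₀max hfr
  obtain ⟨U, hUopen, hUne, hUpos⟩ := hχpos
  -- invariance of the max set
  have hinv : ∀ t, u t = m → ∀ s ∈ U, u (t + M.mulVec s) = m := by
    intro t ht s hs
    set g : (Fin κ → ℝ) → ℝ := fun s => (m - u (t + M.mulVec s)) * χ s with hg
    have hgcont : Continuous g := ((continuous_const.sub
      (hucont.comp (continuous_const.add hmv))).mul hχcont)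
    have hgint : Integrable g := hgcont.integrable_of_hasCompactSupport hχsupp.mul_left
    have hgnonneg : ∀ x, 0 ≤ g x := fun x =>
      mul_nonneg (sub_nonneg.mpr (hle _)) (hχnonneg x)
    have hmint : Integrable (fun s : Fin κ → ℝ => m * χ s) :=
      (continuous_const.mul hχcont).integrable_of_hasCompactSupport hχsupp.mul_left
    have hgzero : ∫ x, g x = 0 := by
      have : ∀ x, g x = m * χ x - u (t + M.mulVec x) * χ x := by
        intro x; simp [hg]; ring
      rw [show g = fun x => m * χ x - u (t + M.mulVec x) * χ x from funext this,
        integral_sub hmint (hint t), integral_const_mul, hχint, ← hfix t, ht]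
      ring
    have hg0 : ∀ x, g x = 0 := by
      have h1 := (integral_eq_zero_iff_of_nonneg hgnonneg hgint).mp hgzero
      have h2 := (hgcont.ae_eq_iff_eq volume continuous_zero).mp h1
      exact fun x => congrFun h2 x
    have := hg0 s
    rcases mul_eq_zero.mp this with h | h
    · linarith [sub_eq_zero.mp h]
    · exact absurd h (ne_of_gt (hUpos s hs))
  -- the image of U under mulVec is open
  have : Invertible M := M.invertibleOfIsUnitDet hM
  set L := M.toLinearEquiv' this with hL
  have hLeq : ∀ x, L x = M.mulVec x := by
    intro x
    show (L : Module.End ℝ (Fin κ → ℝ)) x = _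
    rw [Matrix.toLinearEquiv'_apply, Matrix.toLin'_apply]
  have hopen : IsOpen (M.mulVec '' U) := by
    have h := (L.toContinuousLinearEquiv).isOpenMap U hUopen
    have him : ⇑L.toContinuousLinearEquiv '' U = M.mulVec '' U := by
      apply Set.image_congr; intro x _; exact hLeq x
    rwa [him] at h
  obtain ⟨s₀, hs₀⟩ := hUne
  obtain ⟨ε, hε, hball⟩ := Metric.isOpen_iff.mp hopen (M.mulVec s₀) ⟨s₀, hs₀, rfl⟩
  -- step: adding a point of the ball preserves maximality
  have hstep : ∀ t, u t = m → ∀ y ∈ Metric.ball (M.mulVec s₀) ε, u (t + y) = m := by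
    intro t ht y hy
    obtain ⟨s, hs, rfl⟩ := hball hy
    exact hinv t ht s hs
  set a := M.mulVec s₀ with ha
  -- by induction we reach all points within n*ε of n•a
  have hreach : ∀ n : ℕ, 1 ≤ n → ∀ x : Fin κ → ℝ,
      ‖x - (n : ℝ) • a‖ < n * ε → u (t₀ + x) = m := by
    intro n hn
    induction n, hn using Nat.le_induction with
    | base =>
      intro x hx
      apply hstep t₀ rfl
      rw [Metric.mem_ball, dist_eq_norm]
      simpa using hx
    | succ n hn IH =>
      intro x hx
      have hc : (0 : ℝ) < (n : ℝ) + 1 := by positivity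
      set c : ℝ := (n : ℝ) + 1 with hcdef
      set z := c⁻¹ • x with hz
      have hza : z - a = c⁻¹ • (x - c • a) := by
        rw [hz, smul_sub, smul_smul, inv_mul_cancel₀ hc.ne', one_smul]
      have hzball : z ∈ Metric.ball a ε := by
        rw [Metric.mem_ball, dist_eq_norm, hza, norm_smul]
        have : ‖x - c • a‖ < c * ε := by
          have : ((n : ℝ) + 1) • a = c • a := by rw [hcdef]
          calc ‖x - c • a‖ = ‖x - ((n+1 : ℕ) : ℝ) • a‖ := by push_cast [hcdef]; ring_nf
            _ < ((n+1 : ℕ)) * ε := hx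
            _ = c * ε := by push_cast [hcdef]; ring
        calc ‖c⁻¹‖ * ‖x - c • a‖ < ‖c⁻¹‖ * (c * ε) := by
              apply mul_lt_mul_of_pos_left this
              simp [norm_pos_iff]; exact hc.ne'
          _ = ε := by rw [Real.norm_eq_abs, abs_of_pos (inv_pos.mpr hc)]
                      field_simp
      set y := (n : ℝ) • z with hy
      have hyn : ‖y - (n : ℝ) • a‖ < n * ε := by
        have hn0 : (0:ℝ) < n := by exact_mod_cast hn
        have : y - (n : ℝ) • a = (n : ℝ) • (z - a) := by rw [hy, smul_sub]
        rw [this, norm_smul, Real.norm_eq_abs, abs_of_pos hn0]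
        have := Metric.mem_ball.mp hzball
        rw [dist_eq_norm] at this
        exact (mul_lt_mul_of_pos_left this hn0)
      have hxyz : x = y + z := by
        rw [hy, hz, smul_smul, ← add_smul]
        have : (n : ℝ) * c⁻¹ + c⁻¹ = 1 := by
          rw [hcdef]; field_simp
        rw [this, one_smul]
      have h1 : u (t₀ + y) = m := IH y hyn
      have := hstep (t₀ + y) h1 z hzball
      rwa [add_assoc, ← hxyz] at this
  -- conclude: every point is equivalent mod ℤ^κ to a reachable point
  have hall : ∀ t, u t = m := by
    intro t
    obtain ⟨n₀, hn₀⟩ := exists_nat_gt (1 / (2 * ε))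
    set n := n₀ + 1 with hn
    have hn1 : 1 ≤ n := Nat.le_add_left 1 n₀
    have hnε : 1 / 2 < (n : ℝ) * ε := by
      have h1 : (1 / (2 * ε)) < (n : ℝ) := by
        calc (1 / (2*ε)) < (n₀ : ℝ) := hn₀
          _ ≤ (n : ℝ) := by exact_mod_cast Nat.le_succ n₀
      calc (1:ℝ)/2 = (1 / (2 * ε)) * ε := by field_simp
        _ < (n : ℝ) * ε := by exact mul_lt_mul_of_pos_right h1 hε
    set w : Fin κ → ℝ := t₀ + (n : ℝ) • a - t with hw
    set k : Fin κ → ℤ := fun i => round (w i) with hk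
    set x : (Fin κ → ℝ) := (t + fun i => ((k i : ℤ) : ℝ)) - t₀ with hx
    have hxn : ‖x - (n : ℝ) • a‖ ≤ 1 / 2 := by
      rw [pi_norm_le_iff_of_nonneg (by norm_num)]
      intro i
      have : (x - (n : ℝ) • a) i = ((k i : ℝ)) - w i := by
        simp [hx, hw]; ring
      rw [this, Real.norm_eq_abs, abs_sub_comm]
      exact abs_sub_round (w i)
    have h1 : u (t₀ + x) = m := hreach n hn1 x (lt_of_le_of_lt hxn hnε)
    have h2 : t₀ + x = t + fun i => ((k i : ℤ) : ℝ) := by rw [hx]; ring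
    rw [h2, hper] at h1
    exact h1
  intro t; rw [hall t, hall 0]

/-- Let `κ ≥ 1`, `M ∈ GL(κ,ℝ)`, and `χ : ℝ^κ → ℝ` continuous, compactly
supported, nonnegative, with `∫χ = 1` and positive on some nonempty open set.  If
`v : ℝ^κ → ℂ` is continuous, `ℤ^κ`-periodic, and satisfies
`v(t) = ∫ v(t + Ms) χ(s) ds` for all `t`, then `v` is constant. -/
theorem periodic_fixed_point_of_averaging_is_constant
    {κ : ℕ} (hκ : 1 ≤ κ)
    (M : Matrix (Fin κ) (Fin κ) ℝ) (hM : IsUnit M.det)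
    (χ : (Fin κ → ℝ) → ℝ)
    (hχcont : Continuous χ) (hχsupp : HasCompactSupport χ)
    (hχnonneg : ∀ s, 0 ≤ χ s) (hχint : ∫ s : Fin κ → ℝ, χ s = 1)
    (hχpos : ∃ U : Set (Fin κ → ℝ), IsOpen U ∧ U.Nonempty ∧ ∀ s ∈ U, 0 < χ s)
    (v : (Fin κ → ℝ) → ℂ) (hvcont : Continuous v)
    (hper : ∀ (t : Fin κ → ℝ) (k : Fin κ → ℤ), v (t + fun i => (k i : ℝ)) = v t)
    (hfix : ∀ t : Fin κ → ℝ, v t = ∫ s : Fin κ → ℝ, v (t + M.mulVec s) * (χ s : ℂ)) :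
    ∃ c : ℂ, ∀ t, v t = c := by
  have hmv : Continuous (M.mulVec) := M.mulVecLin.continuous_of_finiteDimensional
  have hint : ∀ t : Fin κ → ℝ, Integrable (fun s => v (t + M.mulVec s) * (χ s : ℂ)) := by
    intro t
    have hc : Continuous (fun s => v (t + M.mulVec s) * (χ s : ℂ)) :=
      (hvcont.comp (continuous_const.add hmv)).mul (Complex.continuous_ofReal.comp hχcont)
    apply hc.integrable_of_hasCompactSupport
    apply HasCompactSupport.intro hχsupp.isCompact
    intro x hx
    have : χ x = 0 := image_eq_zero_of_notMem_tsupport hx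
    simp [this]
  have hre : ∀ t, (v t).re = (v 0).re := by
    apply aux_real_const M hM χ hχcont hχsupp hχnonneg hχint hχpos
    · exact Complex.continuous_re.comp hvcont
    · intro t k; simp [hper t k]
    · intro t
      have h := integral_re (hint t)
      simp only [RCLike.re_to_complex] at h
      rw [hfix t, ← h]
      congr 1; funext s
      simp [Complex.mul_re]
  have him : ∀ t, (v t).im = (v 0).im := by
    apply aux_real_const M hM χ hχcont hχsupp hχnonneg hχint hχpos
    · exact Complex.continuous_im.comp hvcont
    · intro t k; simp [hper t k]
    · intro t
      have h := integral_im (hint t)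
      simp only [RCLike.im_to_complex] at h
      rw [hfix t, ← h]
      congr 1; funext s
      simp [Complex.mul_im]
  exact ⟨v 0, fun t => Complex.ext (hre t) (him t)⟩
end
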